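/- arXiv:2202.07733 — 7 statements merged into one kernel-verified Lean document; each statement's English description precedes it below -/
import Mathlib

section
/- If a Hamiltonian path in K_v realizes a multiset L of edge-lengths, then for every divisor d of v, the number of elements of L that are multiples of d is at most v - d. -/
def pathLen (v p q : ℕ) : ℕ := min (Nat.dist p q) (v - Nat.dist p q)

def lengths (v : ℕ) (h : List ℕ) : Multiset ℕ :=
  (List.zipWith (pathLen v) h h.tail : List ℕ)

def IsHamPath (v : ℕ) (h : List ℕ) : Prop :=
  h.Nodup ∧ h.length = v ∧ ∀ p ∈ h, p < v

/-- number of adjacent equal pairs in a list -/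
def adjEq : List ℕ → ℕ
  | [] => 0
  | [_] => 0
  | a :: b :: t => (if a = b then 1 else 0) + adjEq (b :: t)

lemma adjEq_add_card_le (m : List ℕ) : adjEq m + m.toFinset.card ≤ m.length := by
  induction m with
  | nil => simp [adjEq]
  | cons a t ih =>
    cases t with
    | nil => simp [adjEq]
    | cons b t' =>
      by_cases hab : a = b
      · subst hab
        have hins : (a :: a :: t').toFinset = (a :: t').toFinset := by
          simp [List.toFinset_cons]
        rw [hins]
        simp only [adjEq, if_pos rfl, if_true, List.length_cons] at *
        omega
      · have hcard : (a :: b :: t').toFinset.card ≤ (b :: t').toFinset.card + 1 := by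
          rw [List.toFinset_cons]
          exact Finset.card_insert_le _ _
        simp only [adjEq, if_neg hab, List.length_cons] at *
        omega

lemma mod_eq_of_dvd_pathLen {v d p q : ℕ} (hd : d ∣ v) (hp : p < v) (hq : q < v)
    (hdl : d ∣ pathLen v p q) : p % d = q % d := by
  have hdist : d ∣ Nat.dist p q := by
    rcases min_cases (Nat.dist p q) (v - Nat.dist p q) with ⟨h1, _⟩ | ⟨h1, _⟩
    · rwa [pathLen, h1] at hdl
    · rw [pathLen, h1] at hdl
      have hle : Nat.dist p q ≤ v := by
        rcases le_total p q with hpq | hpq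
        · rw [Nat.dist_eq_sub_of_le hpq]; omega
        · rw [Nat.dist_eq_sub_of_le_right hpq]; omega
      have := Nat.dvd_sub hd hdl
      rwa [Nat.sub_sub_self hle] at this
  rcases le_total p q with hpq | hpq
  · rw [Nat.dist_eq_sub_of_le hpq] at hdist
    exact (Nat.modEq_iff_dvd' hpq).2 hdist
  · rw [Nat.dist_eq_sub_of_le_right hpq] at hdist
    exact ((Nat.modEq_iff_dvd' hpq).2 hdist).symm

lemma count_le_adjEq {v d : ℕ} (hd : d ∣ v) :
    ∀ h : List ℕ, (∀ p ∈ h, p < v) →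
      (List.zipWith (pathLen v) h h.tail).countP (fun l => d ∣ l) ≤
        adjEq (h.map (· % d)) := by
  intro h
  induction h with
  | nil => simp
  | cons a t ih =>
    intro hlt
    cases t with
    | nil => simp [adjEq]
    | cons b t' =>
      have ha : a < v := hlt a (by simp)
      have hb : b < v := hlt b (by simp)
      have iht : (List.zipWith (pathLen v) (b :: t') t').countP (fun l => d ∣ l) ≤
          adjEq ((b :: t').map (· % d)) := by
        have := ih (fun p hp => hlt p (List.mem_cons_of_mem a hp))
        simpa using this
      simp only [List.tail_cons, List.zipWith_cons_cons, List.countP_cons, List.map_cons]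
      show (List.zipWith (pathLen v) (b :: t') t').countP (fun l => d ∣ l) +
          (if (fun l => decide (d ∣ l)) (pathLen v a b) = true then 1 else 0) ≤
          adjEq (a % d :: b % d :: t'.map (· % d))
      simp only [adjEq, decide_eq_true_eq]
      by_cases hdl : d ∣ pathLen v a b
      · rw [if_pos hdl, if_pos (mod_eq_of_dvd_pathLen hd ha hb hdl)]
        simp only [List.map_cons] at iht
        omega
      · rw [if_neg hdl]
        simp only [List.map_cons] at iht
        split <;> omega

lemma toFinset_eq_range {v : ℕ} {h : List ℕ} (hham : IsHamPath v h) :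
    h.toFinset = Finset.range v := by
  obtain ⟨hnd, hlen, hlt⟩ := hham
  apply Finset.eq_of_subset_of_card_le
  · intro x hx
    simp only [List.mem_toFinset] at hx
    simpa using hlt x hx
  · rw [Finset.card_range, List.toFinset_card_of_nodup hnd, hlen]

theorem stmt_1 (v : ℕ) (h : List ℕ) (L : Multiset ℕ)
    (hham : IsHamPath v h) (hreal : lengths v h = L) :
    ∀ d, d ∣ v → Multiset.card (L.filter (fun l => d ∣ l)) ≤ v - d := by
  intro d hd
  rcases Nat.eq_zero_or_pos d with hd0 | hdpos
  · subst hd0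
    have hv0 : v = 0 := by simpa using hd
    subst hv0
    have : h = [] := List.length_eq_zero_iff.1 hham.2.1
    subst this
    simp [← hreal, lengths]
  rcases Nat.eq_zero_or_pos v with hv0 | hvpos
  · subst hv0
    have : h = [] := List.length_eq_zero_iff.1 hham.2.1
    subst this
    simp [← hreal, lengths]
  have hdlev : d ≤ v := Nat.le_of_dvd hvpos hd
  -- key: card of filter equals countP on the list
  have hcount : Multiset.card (L.filter (fun l => d ∣ l)) =
      (List.zipWith (pathLen v) h h.tail).countP (fun l => d ∣ l) := by
    rw [← hreal, lengths]
    rw [Multiset.filter_coe, Multiset.coe_card, List.countP_eq_length_filter]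
  rw [hcount]
  have h1 := count_le_adjEq hd h hham.2.2
  -- residues finset is range d
  have hres : (h.map (· % d)).toFinset = Finset.range d := by
    ext x
    simp only [List.mem_toFinset, List.mem_map, Finset.mem_range]
    constructor
    · rintro ⟨y, _, rfl⟩
      exact Nat.mod_lt _ hdpos
    · intro hx
      refine ⟨x, ?_, Nat.mod_eq_of_lt hx⟩
      have hxm : x ∈ h.toFinset := by
        rw [toFinset_eq_range hham]
        simp only [Finset.mem_range]
        omega
      simpa using hxm
  have h2 := adjEq_add_card_le (h.map (· % d))
  rw [hres, Finset.card_range, List.length_map, hham.2.1] at h2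
  omega
end

section
/- Let L = {x^a, y^b, z^c} with x < y < z and v = a+b+c+1 = 2z. Then no realization of L in K_v is z-growable at any m: if a Hamiltonian path realizing L were z-growable at m, the vertex m-z+1 would need an incident edge lengthened by the growth embedding, but when v = 2z no edge of K_v has its length increased by the growth embedding with parameter z. -/
/-- The growth embedding at `m` with parameter `x`. -/
def gemb (m x p : ℕ) : ℕ := if p ≤ m then p else p + x

/-- The edge `e` of `K_v` has its length increased by the growth embedding. -/
def EdgeIncr (v x m : ℕ) (e : ℕ × ℕ) : Prop :=
  pathLen v e.1 e.2 < pathLen (v + x) (gemb m x e.1) (gemb m x e.2)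

/-- The Hamiltonian path `h` is `x`-growable at `m`: each vertex `p` with
`m - x < p ≤ m` is incident with exactly one path-edge whose length is increased
by the growth embedding, and no other path-edge has its length increased. -/
def Growable (v x m : ℕ) (h : List ℕ) : Prop :=
  x ≤ m + 1 ∧
  (∀ p : ℕ, m < p + x → p ≤ m →
    ((h.zip h.tail).countP fun e =>
      decide ((e.1 = p ∨ e.2 = p) ∧
        pathLen v e.1 e.2 < pathLen (v + x) (gemb m x e.1) (gemb m x e.2))) = 1) ∧
  ∀ e ∈ h.zip h.tail, EdgeIncr v x m e → ∃ p, m < p + x ∧ p ≤ m ∧ (e.1 = p ∨ e.2 = p)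

lemma key_noincr (z m u w : ℕ) (hz : 0 < z) (hu : u < 2 * z) (hw : w < 2 * z)
    (hm : m < 2 * z) (hzm : z ≤ m + 1) (hp : u = m + 1 - z ∨ w = m + 1 - z) :
    ¬ pathLen (2 * z) u w < pathLen (2 * z + z) (gemb m z u) (gemb m z w) := by
  unfold pathLen gemb Nat.dist
  simp only [Nat.min_def]
  split_ifs <;> omega

theorem stmt_3 (x y z a b c v : ℕ) (hxy : x < y) (hyz : y < z) (hx : 0 < x)
    (ha : 0 < a) (hb : 0 < b) (hc : 0 < c)
    (hv : v = a + b + c + 1) (hv2 : v = 2 * z) :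
    ¬ ∃ (h : List ℕ) (m : ℕ), IsHamPath v h ∧
      lengths v h = Multiset.replicate a x + Multiset.replicate b y + Multiset.replicate c z ∧
      Growable v z m h := by
  have hz : 0 < z := hx.trans (hxy.trans hyz)
  rintro ⟨h, m, ⟨hnd, hlen, hlt⟩, hL, hzm, hcnt, hall⟩
  subst hv2
  -- Step 1: m < 2 * z
  have hm : m < 2 * z := by
    by_contra hm
    push_neg at hm
    have h1 := hcnt m (by omega) le_rfl
    rw [List.countP_eq_zero.mpr] at h1
    · exact one_ne_zero h1.symm
    · intro e he
      have h1 := hlt e.1 (List.of_mem_zip he).1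
      have h2 := hlt e.2 ((List.mem_of_mem_tail (List.of_mem_zip he).2))
      simp only [decide_eq_true_eq, not_and]
      rintro (rfl | rfl) <;> omega
  -- Step 2: the vertex m + 1 - z has no incident increasing edge
  have h1 := hcnt (m + 1 - z) (by omega) (by omega)
  rw [List.countP_eq_zero.mpr] at h1
  · exact one_ne_zero h1.symm
  · intro e he
    have hu := hlt e.1 (List.of_mem_zip he).1
    have hw := hlt e.2 ((List.mem_of_mem_tail (List.of_mem_zip he).2))
    simp only [decide_eq_true_eq, not_and]
    intro hor
    exact key_noincr z m e.1 e.2 hz hu hw hm hzm hor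
end

section
/- Let L = {x^a, y^b, z^c} with x < y < z and c < z - y. Then L has no z-growable realization: in any realization z-growable at m, each of the z - y vertices m-z+1, ..., m-y must be incident with a lengthened edge, and each lengthened edge incident with such a vertex must have length z, but there are only c < z-y edges of length z. -/
/-!
Since some edge has length `z`, `2 z ≤ v`. Each vertex `p` with `m - z < p ≤ m - y` lies on a
lengthened edge `pq`, and this edge is longer than `y`: if `q ≤ m` it must wrap around, which
forces `q < p` (as `q - p < z ≤ v / 2`) and then its length `v - (p - q)` is at least
`v - m + y > y`; if `q > m` it is not a wrap-around edge, so its length is `q - p > m - p ≥ y`.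
Hence it has length `z`. An edge of length `z` cannot join two of these `z - y < z` consecutive
vertices, so they need `z - y` distinct edges of length `z`, but there are only `c < z - y`.
-/

lemma pathLen_le_dist (v p q : ℕ) : pathLen v p q ≤ Nat.dist p q :=
  min_le_left _ _

lemma two_mul_pathLen_le (v p q : ℕ) : 2 * pathLen v p q ≤ v := by
  unfold pathLen
  omega

lemma pathLen_comm (v p q : ℕ) : pathLen v p q = pathLen v q p := by
  simp only [pathLen, Nat.dist_comm]

lemma edgeIncr_swap {v x m : ℕ} {e : ℕ × ℕ} : EdgeIncr v x m e.swap ↔ EdgeIncr v x m e := by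
  simp only [EdgeIncr, Prod.fst_swap, Prod.snd_swap, pathLen_comm]

lemma lt_pathLen_of_edgeIncr {v y z m p q : ℕ} (hzv : 2 * z ≤ v) (hmv : m < v)
    (hpy : p + y ≤ m) (hpz : m < p + z) (hincr : EdgeIncr v z m (p, q)) :
    y < pathLen v p q := by
  have hv := two_mul_pathLen_le (v + z) (gemb m z p) (gemb m z q)
  unfold EdgeIncr gemb at hincr hv
  by_cases hqm : q ≤ m <;> simp only [pathLen, Nat.dist, if_pos (by omega : p ≤ m),
    hqm, if_true, if_false] at hincr hv ⊢ <;> omega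

lemma card_le_countP_of_cover {α : Type*} [DecidableEq α] (S : Finset α) (E : List (α × α))
    (P : α × α → Prop) [DecidablePred P]
    (hcover : ∀ p ∈ S, ∃ e ∈ E, P e ∧ (e.1 = p ∨ e.2 = p))
    (hsep : ∀ e ∈ E, P e → e.1 ∈ S → e.2 ∈ S → e.1 = e.2) :
    S.card ≤ E.countP P := by
  choose! f hfE hfP hfp using hcover
  have hmaps : ∀ p ∈ S, f p ∈ (E.filter P).toFinset := fun p hp => by
    simpa [List.mem_filter] using ⟨hfE p hp, hfP p hp⟩
  have hinj : Set.InjOn f S := by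
    intro p hp q hq hpq
    have hp' := hfp p hp
    rw [hpq] at hp'
    have hsep' := hsep (f q) (hfE q hq) (hfP q hq)
    grind
  calc S.card ≤ (E.filter P).toFinset.card := Finset.card_le_card_of_injOn f hmaps hinj
    _ ≤ (E.filter P).length := List.toFinset_card_le _
    _ = E.countP P := (List.countP_eq_length_filter ..).symm

lemma lengths_eq_map (v : ℕ) (h : List ℕ) :
    lengths v h = ((h.zip h.tail).map fun e => pathLen v e.1 e.2 : List ℕ) := by
  rw [lengths, ← List.map_uncurry_zip_eq_zipWith]
  rfl

lemma count_lengths (v n : ℕ) (h : List ℕ) :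
    (lengths v h).count n = (h.zip h.tail).countP (fun e => pathLen v e.1 e.2 = n) := by
  rw [lengths_eq_map, Multiset.coe_count, List.count, List.countP_map]
  rfl

section lengths

variable {v : ℕ} {h : List ℕ}

lemma mem_lengths {e : ℕ × ℕ} (he : e ∈ h.zip h.tail) : pathLen v e.1 e.2 ∈ lengths v h := by
  rw [lengths_eq_map, Multiset.mem_coe]
  exact List.mem_map_of_mem he

variable {x y z a b c : ℕ}

lemma pathLen_le_or_eq_of_lengths_eq
    (hL : lengths v h = Multiset.replicate a x + Multiset.replicate b y + Multiset.replicate c z)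
    (hxy : x ≤ y) {e : ℕ × ℕ} (he : e ∈ h.zip h.tail) :
    pathLen v e.1 e.2 ≤ y ∨ pathLen v e.1 e.2 = z := by
  have := mem_lengths (v := v) he
  simp only [hL, Multiset.mem_add, Multiset.mem_replicate] at this
  omega

lemma countP_pathLen_eq_of_lengths_eq
    (hL : lengths v h = Multiset.replicate a x + Multiset.replicate b y + Multiset.replicate c z)
    (hxz : x ≠ z) (hyz : y ≠ z) :
    (h.zip h.tail).countP (fun e => pathLen v e.1 e.2 = z) = c := by
  rw [← count_lengths, hL]
  simp only [Multiset.count_add, Multiset.count_replicate]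
  split_ifs <;> omega

end lengths

namespace Growable

variable {v z m : ℕ} {h : List ℕ}

lemma lt_of_forall_lt (hg : Growable v z m h) (hh : ∀ p ∈ h, p < v) (hz : 0 < z) : m < v := by
  obtain ⟨e, he, hme⟩ := List.countP_pos_iff.mp ((hg.2.1 m (by omega) le_rfl).symm ▸ one_pos)
  have hev := hh _ (List.of_mem_zip he).1
  have hev' := hh _ (List.mem_of_mem_tail (List.of_mem_zip he).2)
  simp only [decide_eq_true_eq] at hme
  omega

lemma exists_incident_lt_pathLen {y p : ℕ} (hg : Growable v z m h) (hzv : 2 * z ≤ v)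
    (hmv : m < v) (hpy : p + y ≤ m) (hpz : m < p + z) :
    ∃ e ∈ h.zip h.tail, y < pathLen v e.1 e.2 ∧ (e.1 = p ∨ e.2 = p) := by
  obtain ⟨e, he, hpe⟩ := List.countP_pos_iff.mp ((hg.2.1 p hpz (by omega)).symm ▸ one_pos)
  simp only [decide_eq_true_eq] at hpe
  obtain ⟨hep, hincr⟩ := hpe
  refine ⟨e, he, ?_, hep⟩
  rcases hep with rfl | rfl
  · exact lt_pathLen_of_edgeIncr hzv hmv hpy hpz hincr
  · rw [pathLen_comm]
    exact lt_pathLen_of_edgeIncr hzv hmv hpy hpz (edgeIncr_swap.mpr hincr)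

end Growable

theorem stmt_4_general (x y z a b c v : ℕ) (hxy : x < y) (hyz : y < z)
    (hc : 0 < c) (hcz : c < z - y) :
    ¬ ∃ (h : List ℕ) (m : ℕ), IsHamPath v h ∧
      lengths v h = Multiset.replicate a x + Multiset.replicate b y + Multiset.replicate c z ∧
      Growable v z m h := by
  rintro ⟨h, m, ⟨-, -, hh⟩, hL, hg⟩
  have hcount := countP_pathLen_eq_of_lengths_eq hL (by omega) (by omega)
  have hzv : 2 * z ≤ v := by
    obtain ⟨e, -, he⟩ := List.countP_pos_iff.mp (hcount ▸ hc)
    simpa using (of_decide_eq_true he) ▸ two_mul_pathLen_le v e.1 e.2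
  have hmv := hg.lt_of_forall_lt hh (by omega)
  have hwindow := card_le_countP_of_cover (Finset.Ico (m + 1 - z) (m + 1 - y)) (h.zip h.tail)
    (fun e => pathLen v e.1 e.2 = z) ?cover ?sep
  · rw [Nat.card_Ico, hcount] at hwindow
    have hzm := hg.1
    omega
  case cover =>
    intro p hp
    rw [Finset.mem_Ico] at hp
    obtain ⟨e, he, hlong, hep⟩ :=
      hg.exists_incident_lt_pathLen (y := y) (p := p) hzv hmv (by omega) (by omega)
    exact ⟨e, he, (pathLen_le_or_eq_of_lengths_eq hL hxy.le he).resolve_left (by omega), hep⟩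
  case sep =>
    rintro e - he h1 h2
    have := he ▸ pathLen_le_dist v e.1 e.2
    simp only [Finset.mem_Ico, Nat.dist] at h1 h2 this
    omega

theorem stmt_4 (x y z a b c v : ℕ) (hxy : x < y) (hyz : y < z) (hx : 0 < x)
    (ha : 0 < a) (hb : 0 < b) (hc : 0 < c)
    (hv : v = a + b + c + 1) (hcz : c < z - y) :
    ¬ ∃ (h : List ℕ) (m : ℕ), IsHamPath v h ∧
      lengths v h = Multiset.replicate a x + Multiset.replicate b y + Multiset.replicate c z ∧
      Growable v z m h :=
  stmt_4_general x y z a b c v hxy hyz hc hcz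
end

section
/- Let v be even and 6 < x ≤ v/2 with x odd. The sequence v-2, v-4, ..., x+1, x-1, x-2, x-4, ..., 1, v-1, v-3, ..., x, 0, 2, 4, ..., x-3 is a Hamiltonian path in K_v on {0,...,v-1} realizing the multiset {1, 2^{v-3}, x}: all consecutive edge-lengths are 2 except the edge between x-1 and x-2 (length 1) and the edge between x and 0 (length x). -/
/-- The sequence v-2, v-4, ..., x+1, x-1, x-2, x-4, ..., 1, v-1, v-3, ..., x, 0, 2, 4, ..., x-3. -/
def pathEvenV (v x : ℕ) : List ℕ :=
  (List.range ((v - x - 1) / 2)).map (fun i => v - 2 - 2 * i) ++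
  (x - 1) :: (List.range ((x - 1) / 2)).map (fun i => x - 2 - 2 * i) ++
  (List.range ((v - x + 1) / 2)).map (fun i => v - 1 - 2 * i) ++
  (List.range ((x - 1) / 2)).map (fun i => 2 * i)

/-!
The path is made of four runs with step 2 — the even vertices from v-2 down to x+1, the odd
vertices from x-2 down to 1, the odd vertices from v-1 down to x, and the even vertices from 0
up to x-3 — joined by the edges x+1 → x-1 (length 2), x-1 → x-2 (length 1), 1 → v-1 (length 2
around the cycle) and x → 0 (length x, because x ≤ v/2). Together with x-1 the runs cover every
vertex, and as the list has exactly v entries, no vertex is repeated.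
-/

lemma isHamPath_of_forall_mem {v : ℕ} {h : List ℕ} (hlen : h.length = v)
    (hmem : ∀ p < v, p ∈ h) (hlt : ∀ p ∈ h, p < v) : IsHamPath v h := by
  have hperm : (List.range v).Perm h :=
    (List.nodup_range.subperm fun p hp => hmem p (List.mem_range.1 hp)).perm_of_length_le
      (by simp [hlen])
  exact ⟨hperm.nodup_iff.1 List.nodup_range, hlen, hlt⟩

lemma pathLen_of_le {v p q : ℕ} (hpq : p ≤ q) (hv : 2 * (q - p) ≤ v) :
    pathLen v p q = q - p := by
  simp only [pathLen, Nat.dist]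
  omega

lemma pathLen_of_ge {v p q : ℕ} (hqp : q ≤ p) (hv : 2 * (p - q) ≤ v) :
    pathLen v p q = p - q := by
  simp only [pathLen, Nat.dist]
  omega

lemma pathLen_eq_sub_sub_of_le {v p q : ℕ} (hpq : p ≤ q) (hq : q ≤ v) (hv : v ≤ 2 * (q - p)) :
    pathLen v p q = v - (q - p) := by
  simp only [pathLen, Nat.dist]
  omega

lemma lengths_singleton (v a : ℕ) : lengths v [a] = 0 := rfl

lemma lengths_cons_cons (v a b : ℕ) (l : List ℕ) :
    lengths v (a :: b :: l) = pathLen v a b ::ₘ lengths v (b :: l) := rfl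

lemma lengths_cons_map_range_append (v a n : ℕ) (f : ℕ → ℕ) (l : List ℕ) :
    lengths v (a :: ((List.range (n + 1)).map f ++ l))
      = pathLen v a (f 0) ::ₘ lengths v ((List.range (n + 1)).map f ++ l) := by
  simp only [List.range_succ_eq_map, List.map_cons, List.cons_append, lengths_cons_cons]

lemma lengths_map_range_append {v d n : ℕ} {f : ℕ → ℕ}
    (hf : ∀ i < n, pathLen v (f i) (f (i + 1)) = d) (l : List ℕ) :
    lengths v ((List.range (n + 1)).map f ++ l)
      = Multiset.replicate n d + lengths v (f n :: l) := by
  induction n generalizing l with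
  | zero => simp
  | succ n ih =>
    rw [List.range_succ, List.map_append, List.append_assoc, List.map_singleton,
      List.singleton_append, ih (fun i hi => hf i (by omega)), lengths_cons_cons,
      hf n (by omega), Multiset.add_cons, Multiset.replicate_succ, Multiset.cons_add]

lemma lengths_map_sub_two_mul_range_append {v s n : ℕ} (hs : 2 * n ≤ s) (hv : 4 ≤ v)
    (l : List ℕ) :
    lengths v ((List.range (n + 1)).map (fun i => s - 2 * i) ++ l)
      = Multiset.replicate n 2 + lengths v ((s - 2 * n) :: l) := by
  refine lengths_map_range_append (fun i _ => ?_) l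
  rw [pathLen_of_ge] <;> omega

lemma lengths_map_two_mul_range_append {v n : ℕ} (hv : 4 ≤ v) (l : List ℕ) :
    lengths v ((List.range (n + 1)).map (fun i => 2 * i) ++ l)
      = Multiset.replicate n 2 + lengths v ((2 * n) :: l) := by
  refine lengths_map_range_append (fun i _ => ?_) l
  rw [pathLen_of_le] <;> omega

lemma length_pathEvenV {v x : ℕ} (hv : Even v) (hx : Odd x) (hxv : x < v) :
    (pathEvenV v x).length = v := by
  obtain ⟨m, rfl⟩ := hv
  obtain ⟨k, rfl⟩ := hx
  simp only [pathEvenV, List.length_append, List.length_cons, List.length_map,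
    List.length_range]
  omega

lemma mem_pathEvenV {v x p : ℕ} (hv : Even v) (hx : Odd x) (hp : p < v) :
    p ∈ pathEvenV v x := by
  obtain ⟨m, rfl⟩ := hv
  obtain ⟨k, rfl⟩ := hx
  simp only [pathEvenV, List.mem_append, List.mem_cons, List.mem_map, List.mem_range]
  rcases Nat.even_or_odd' p with ⟨q, rfl | rfl⟩
  · rcases lt_trichotomy q k with hq | rfl | hq
    · exact Or.inr ⟨q, by omega, rfl⟩
    · exact Or.inl (Or.inl (Or.inr (Or.inl (by omega))))
    · exact Or.inl (Or.inl (Or.inl ⟨m - 1 - q, by omega, by omega⟩))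
  · by_cases hq : q < k
    · exact Or.inl (Or.inl (Or.inr (Or.inr ⟨k - 1 - q, by omega, by omega⟩)))
    · exact Or.inl (Or.inr ⟨m - 1 - q, by omega, by omega⟩)

lemma lt_of_mem_pathEvenV {v x p : ℕ} (hxv : x < v) (hp : p ∈ pathEvenV v x) :
    p < v := by
  simp only [pathEvenV, List.mem_append, List.mem_cons, List.mem_map, List.mem_range] at hp
  rcases hp with ((⟨i, hi, rfl⟩ | rfl | ⟨i, hi, rfl⟩) | ⟨i, hi, rfl⟩) | ⟨i, hi, rfl⟩ <;> omega

lemma lengths_pathEvenV {v x : ℕ} (hv : Even v) (hx : Odd x) (h3 : 3 ≤ x) (hxv : 2 * x ≤ v) :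
    lengths v (pathEvenV v x) = 1 ::ₘ x ::ₘ Multiset.replicate (v - 3) 2 := by
  obtain ⟨a, j, hva, hxj⟩ : ∃ a j, v = 2 * a + 2 * j + 6 ∧ x = 2 * j + 3 := by
    obtain ⟨m, rfl⟩ := hv
    obtain ⟨k, rfl⟩ := hx
    exact ⟨m - k - 2, k - 1, by omega, by omega⟩
  -- The trailing `++ []` lets the run lemmas, which expect a tail, also rewrite the last run.
  have hpath : pathEvenV v x = (List.range (a + 1)).map (fun i => v - 2 - 2 * i) ++
      (x - 1) :: ((List.range (j + 1)).map (fun i => x - 2 - 2 * i) ++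
      ((List.range (a + 2)).map (fun i => v - 1 - 2 * i) ++
      ((List.range (j + 1)).map (fun i => 2 * i) ++ []))) := by
    rw [pathEvenV, show (v - x - 1) / 2 = a + 1 by omega, show (x - 1) / 2 = j + 1 by omega,
      show (v - x + 1) / 2 = a + 2 by omega]
    simp only [List.append_assoc, List.cons_append, List.append_nil]
  rw [hpath]
  simp (disch := omega) only [lengths_map_sub_two_mul_range_append,
    lengths_map_two_mul_range_append, lengths_cons_cons, lengths_cons_map_range_append,
    lengths_singleton, pathLen_of_ge, pathLen_eq_sub_sub_of_le]
  ext c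
  simp only [Multiset.count_add, Multiset.count_cons, Multiset.count_replicate,
    Multiset.count_zero]
  split_ifs <;> omega

theorem stmt_10 (v x : ℕ) (hv : Even v) (hx : Odd x) (h6 : 6 < x) (hx2 : x ≤ v / 2) :
    IsHamPath v (pathEvenV v x) ∧
    lengths v (pathEvenV v x) = 1 ::ₘ x ::ₘ Multiset.replicate (v - 3) 2 :=
  ⟨isHamPath_of_forall_mem (length_pathEvenV hv hx (by omega))
      (fun _ hp => mem_pathEvenV hv hx hp)
      (fun _ hp => lt_of_mem_pathEvenV (by omega) hp),
    lengths_pathEvenV hv hx (by omega) (by omega)⟩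
end

section
/- Let v be odd and 6 < x ≤ v/2 with x odd. The sequence v-2, v-4, ..., x+2, x, 0, 2, 4, ..., x-1, x-2, x-4, ..., 1, v-1, v-3, ..., x+1 is a Hamiltonian path in K_v on {0,...,v-1} realizing the multiset {1, 2^{v-3}, x}. -/
/-- The sequence v-2, v-4, ..., x+2, x, 0, 2, 4, ..., x-1, x-2, x-4, ..., 1, v-1, v-3, ..., x+1. -/
def pathOddV (v x : ℕ) : List ℕ :=
  (List.range ((v - x - 2) / 2)).map (fun i => v - 2 - 2 * i) ++
  x :: (List.range ((x + 1) / 2)).map (fun i => 2 * i) ++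
  (List.range ((x - 1) / 2)).map (fun i => x - 2 - 2 * i) ++
  (List.range ((v - x) / 2)).map (fun i => v - 1 - 2 * i)

lemma pathLen_eq_of_dist {v p q d : ℕ} (hpq : Nat.dist p q = d) (hd : 2 * d ≤ v) :
    pathLen v p q = d := by
  rw [pathLen, hpq]
  omega

lemma lengths_cons_of_head? {v a b : ℕ} {l : List ℕ} (hb : l.head? = some b) :
    lengths v (a :: l) = pathLen v a b ::ₘ lengths v l := by
  obtain ⟨t, rfl⟩ := List.head?_eq_some_iff.mp hb
  rfl

lemma lengths_append {v a b : ℕ} {l₁ l₂ : List ℕ} (ha : l₁.getLast? = some a)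
    (hb : l₂.head? = some b) :
    lengths v (l₁ ++ l₂) = lengths v l₁ + pathLen v a b ::ₘ lengths v l₂ := by
  induction l₁ with
  | nil => simp at ha
  | cons c l ih =>
    cases l with
    | nil => cases ha; exact (lengths_cons_of_head? hb).trans (zero_add _).symm
    | cons d l =>
      rw [List.cons_append, List.cons_append, lengths_cons_cons, ← List.cons_append,
        ih (by simpa using ha), lengths_cons_cons, Multiset.cons_add]

lemma lengths_map_range_of_step {v d : ℕ} {f : ℕ → ℕ} {k : ℕ}
    (hf : ∀ i, i + 1 < k → pathLen v (f i) (f (i + 1)) = d) :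
    lengths v ((List.range k).map f) = Multiset.replicate (k - 1) d := by
  induction k generalizing f with
  | zero => rfl
  | succ k ih =>
    cases k with
    | zero => rfl
    | succ k =>
      have hhead : ((List.range (k + 1)).map (f ∘ Nat.succ)).head? = some (f 1) := by
        simp [List.head?_range]
      rw [List.range_succ_eq_map, List.map_cons, List.map_map, lengths_cons_of_head? hhead,
        hf 0 (by omega), ih (f := f ∘ Nat.succ) fun i hi => hf (i + 1) (by omega)]
      rfl

lemma lengths_map_range_of_dist {v d : ℕ} {f : ℕ → ℕ} {k : ℕ}
    (hf : ∀ i, i + 1 < k → Nat.dist (f i) (f (i + 1)) = d) (hd : 2 * d ≤ v) :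
    lengths v ((List.range k).map f) = Multiset.replicate (k - 1) d :=
  lengths_map_range_of_step fun i hi => pathLen_eq_of_dist (hf i hi) hd

lemma nodup_map_range {f : ℕ → ℕ} {k : ℕ} (hf : ∀ i < k, ∀ j < k, f i = f j → i = j) :
    ((List.range k).map f).Nodup :=
  List.nodup_range.map_on fun i hi j hj => hf i (List.mem_range.mp hi) j (List.mem_range.mp hj)

lemma pathOddV_eq_append {v x : ℕ} (hv : Odd v) (hx : Odd x) (hxv : x < v) :
    pathOddV v x =
      (List.range ((v - x) / 2)).map (fun i => v - 2 - 2 * i) ++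
      (List.range ((x + 1) / 2)).map (fun i => 2 * i) ++
      (List.range ((x - 1) / 2)).map (fun i => x - 2 - 2 * i) ++
      (List.range ((v - x) / 2)).map (fun i => v - 1 - 2 * i) := by
  rw [Nat.odd_iff] at hv hx
  have hfirst : (List.range ((v - x) / 2)).map (fun i => v - 2 - 2 * i) =
      (List.range ((v - x - 2) / 2)).map (fun i => v - 2 - 2 * i) ++ [x] := by
    rw [show (v - x) / 2 = (v - x - 2) / 2 + 1 by omega, List.range_succ, List.map_append,
      List.map_singleton, show v - 2 - 2 * ((v - x - 2) / 2) = x by omega]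
  simp [pathOddV, hfirst]

lemma isHamPath_pathOddV {v x : ℕ} (hv : Odd v) (hx : Odd x) (hxv : x < v) :
    IsHamPath v (pathOddV v x) := by
  rw [pathOddV_eq_append hv hx hxv]
  rw [Nat.odd_iff] at hv hx
  refine ⟨?_, ?_, ?_⟩
  · simp only [List.nodup_append, List.mem_append, List.mem_map, List.mem_range, or_imp,
      forall_and, forall_exists_index, and_imp, forall_apply_eq_imp_iff₂]
    refine ⟨⟨⟨?_, ?_, ?_⟩, ?_, ?_, ?_⟩, ?_, ⟨?_, ?_⟩, ?_⟩
    all_goals first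
      | exact nodup_map_range fun i _ j _ _ => by omega
      | intros; omega
  · simp only [List.length_append, List.length_map, List.length_range]
    omega
  · simp only [List.mem_append, List.mem_map, List.mem_range]
    rintro p (((⟨i, hi, rfl⟩ | ⟨i, hi, rfl⟩) | ⟨i, hi, rfl⟩) | ⟨i, hi, rfl⟩) <;> omega

lemma lengths_pathOddV {v x : ℕ} (hv : Odd v) (hx : Odd x) (h3 : 3 ≤ x) (hxv : 2 * x < v) :
    lengths v (pathOddV v x) = 1 ::ₘ x ::ₘ Multiset.replicate (v - 3) 2 := by
  rw [pathOddV_eq_append hv hx (by omega)]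
  rw [Nat.odd_iff] at hv hx
  rw [lengths_append (a := 1) (b := v - 1) (by simp [List.getLast?_range]; omega)
      (by simp [List.head?_range]; omega),
    lengths_append (a := x - 1) (b := x - 2) (by simp [List.getLast?_range]; omega)
      (by simp [List.head?_range]; omega),
    lengths_append (a := x) (b := 0) (by simp [List.getLast?_range]; omega)
      (by simp [List.head?_range]; omega)]
  have hstep {f : ℕ → ℕ} {k : ℕ} (hf : ∀ i, i + 1 < k → Nat.dist (f i) (f (i + 1)) = 2) :
      lengths v ((List.range k).map f) = Multiset.replicate (k - 1) 2 :=
    lengths_map_range_of_dist hf (by omega)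
  have hx0 : pathLen v x 0 = x := pathLen_eq_of_dist (by simp [Nat.dist]) (by omega)
  have hx1 : pathLen v (x - 1) (x - 2) = 1 :=
    pathLen_eq_of_dist (by simp only [Nat.dist]; omega) (by omega)
  have hwrap : pathLen v 1 (v - 1) = 2 := by
    simp only [pathLen, Nat.dist]
    omega
  rw [hstep, hstep, hstep, hstep, hx0, hx1, hwrap]
  · ext y
    simp only [Multiset.count_add, Multiset.count_cons, Multiset.count_replicate]
    split_ifs <;> omega
  all_goals intros; simp only [Nat.dist]; omega

theorem stmt_11 (v x : ℕ) (hv : Odd v) (hx : Odd x) (h6 : 6 < x) (hx2 : x ≤ v / 2) :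
    IsHamPath v (pathOddV v x) ∧
    lengths v (pathOddV v x) = 1 ::ₘ x ::ₘ Multiset.replicate (v - 3) 2 := by
  have hxv : 2 * x < v := by rw [Nat.odd_iff] at hv; omega
  exact ⟨isHamPath_pathOddV hv hx (by omega), lengths_pathOddV hv hx (by omega) hxv⟩
end

section
/- Let v be a positive integer not divisible by 3, and suppose the multiset L' = {1^a, 2^b, y} (with a+b+1 = v-1 and y = min(x/3 mod v, v - x/3 mod v) for some x divisible by 3) is realized by a Hamiltonian path in K_v. Then the multiset L = {3^a, 6^b, x} (with each element reduced to its length, i.e., entries at most ⌊v/2⌋) is also realized by a Hamiltonian path in K_v, obtained by multiplying every vertex of the given path by 3 modulo v. -/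
set_option linter.unusedSectionVars false

section
variable (v : ℕ) [NeZero v]

def glen (z : ZMod v) : ℕ := min z.val (v - z.val)

lemma glen_neg (z : ZMod v) : glen v (-z) = glen v z := by
  by_cases hz : z = 0
  · simp [hz]
  · have h1 : (-z).val = v - z.val := by rw [ZMod.neg_val]; simp [hz]
    have h2 : z.val < v := ZMod.val_lt z
    have h3 : z.val ≠ 0 := by simpa [ZMod.val_eq_zero] using hz
    unfold glen; omega

lemma glen_natCast (n : ℕ) : glen v (n : ZMod v) = min (n % v) (v - n % v) := by
  unfold glen; rw [ZMod.val_natCast]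

lemma pathLen_eq_glen (p q : ℕ) (hp : p < v) (hq : q < v) :
    pathLen v p q = glen v ((p : ZMod v) - q) := by
  rcases le_total q p with hle | hle
  · have h1 : ((p : ZMod v) - q) = ((p - q : ℕ) : ZMod v) := by push_cast [hle]; ring
    rw [h1, glen_natCast]
    have h2 : (p - q) % v = p - q := Nat.mod_eq_of_lt (by omega)
    simp only [pathLen, Nat.dist]; omega
  · have h1 : ((p : ZMod v) - q) = -(((q - p : ℕ) : ZMod v)) := by push_cast [hle]; ring
    rw [h1, glen_neg, glen_natCast]
    have h2 : (q - p) % v = q - p := Nat.mod_eq_of_lt (by omega)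
    simp only [pathLen, Nat.dist]; omega

lemma glen_mul3 (z : ZMod v) :
    min ((3 * glen v z) % v) (v - (3 * glen v z) % v) = glen v (3 * z) := by
  rw [← glen_natCast]
  have hcast : ((3 * glen v z : ℕ) : ZMod v) = 3 * ((glen v z : ℕ) : ZMod v) := by
    push_cast; ring
  rw [hcast]
  rcases le_total z.val (v - z.val) with hle | hle
  · have h1 : glen v z = z.val := min_eq_left hle
    rw [h1, ZMod.natCast_rightInverse z]
  · have h1 : glen v z = v - z.val := min_eq_right hle
    have h2 : ((glen v z : ℕ) : ZMod v) = -z := by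
      rw [h1, Nat.cast_sub (le_of_lt (ZMod.val_lt z)), ZMod.natCast_self,
        (ZMod.natCast_rightInverse z : _)]
      ring
    rw [h2, mul_neg, glen_neg]

lemma pathLen_map3 (p q : ℕ) (hp : p < v) (hq : q < v) :
    pathLen v ((3 * p) % v) ((3 * q) % v) =
      min ((3 * pathLen v p q) % v) (v - (3 * pathLen v p q) % v) := by
  rw [pathLen_eq_glen v _ _ (Nat.mod_lt _ (NeZero.pos v)) (Nat.mod_lt _ (NeZero.pos v)),
    pathLen_eq_glen v p q hp hq, glen_mul3]
  congr 1
  rw [ZMod.natCast_mod, ZMod.natCast_mod]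
  push_cast
  ring

lemma zip_aux (G f : ℕ → ℕ) :
    ∀ (l : List ℕ), (∀ p ∈ l, ∀ q ∈ l, pathLen v (f p) (f q) = G (pathLen v p q)) →
    List.zipWith (pathLen v) (l.map f) (l.map f).tail
      = (List.zipWith (pathLen v) l l.tail).map G
  | [], _ => rfl
  | [a], _ => rfl
  | a :: b :: t, hc => by
    have h1 := hc a (by simp) b (by simp)
    have h2 := zip_aux G f (b :: t)
      (fun p hp q hq => hc p (List.mem_cons_of_mem _ hp) q (List.mem_cons_of_mem _ hq))
    simp only [List.map_cons, List.tail_cons, List.zipWith_cons_cons, List.map_cons] at *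
    rw [h1, h2]

end

theorem stmt_14 (v a b x y : ℕ) (hv : 0 < v) (h3v : ¬ (3 ∣ v)) (h3x : 3 ∣ x)
    (hy : y = min ((x / 3) % v) (v - (x / 3) % v))
    (hsize : a + b + 1 = v - 1)
    (h : List ℕ) (hham : IsHamPath v h)
    (hreal : lengths v h = Multiset.replicate a 1 + Multiset.replicate b 2 + {y}) :
    IsHamPath v (h.map (fun t => (3 * t) % v)) ∧
    lengths v (h.map (fun t => (3 * t) % v)) =
      Multiset.replicate a (min (3 % v) (v - 3 % v)) +
      Multiset.replicate b (min (6 % v) (v - 6 % v)) +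
      {min (x % v) (v - x % v)} := by
  haveI : NeZero v := ⟨hv.ne'⟩
  obtain ⟨hnd, hlen, hmem⟩ := hham
  set G : ℕ → ℕ := fun d => min ((3 * d) % v) (v - (3 * d) % v) with hG
  have hf : ∀ p ∈ h, ∀ q ∈ h, pathLen v ((3*p)%v) ((3*q)%v) = G (pathLen v p q) :=
    fun p hp q hq => pathLen_map3 v p q (hmem p hp) (hmem q hq)
  have hl : lengths v (h.map (fun t => (3*t)%v)) = (lengths v h).map G := by
    unfold lengths
    rw [zip_aux v G (fun t => (3*t)%v) h hf, Multiset.map_coe]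
  refine ⟨⟨?_, ?_, ?_⟩, ?_⟩
  · apply hnd.map_on
    intro p hp q hq hpq
    have hc : ((3 * p : ℕ) : ZMod v) = ((3 * q : ℕ) : ZMod v) := by
      have := congrArg (fun n : ℕ => (n : ZMod v)) hpq
      simpa only [ZMod.natCast_mod] using this
    have hu : IsUnit (3 : ZMod v) := by
      rw [show (3 : ZMod v) = ((3 : ℕ) : ZMod v) by push_cast; ring]
      exact (ZMod.isUnit_iff_coprime 3 v).mpr
        ((Nat.prime_three.coprime_iff_not_dvd).mpr h3v)
    push_cast at hc
    have hpq2 : (p : ZMod v) = q := hu.mul_left_cancel hc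
    have := congrArg ZMod.val hpq2
    rwa [ZMod.val_cast_of_lt (hmem p hp), ZMod.val_cast_of_lt (hmem q hq)] at this
  · simpa using hlen
  · intro p hp
    simp only [List.mem_map] at hp
    obtain ⟨t, _, rfl⟩ := hp
    exact Nat.mod_lt _ hv
  · rw [hl, hreal]
    simp only [Multiset.map_add, Multiset.map_replicate, Multiset.map_singleton]
    have hG1 : G 1 = min (3 % v) (v - 3 % v) := by norm_num [hG]
    have hG2 : G 2 = min (6 % v) (v - 6 % v) := by norm_num [hG]
    have hGy : G y = min (x % v) (v - x % v) := by
      have hyw : y = glen v ((x / 3 : ℕ) : ZMod v) := by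
        rw [hy, glen, ZMod.val_natCast]
      have h3w : (3 : ZMod v) * ((x / 3 : ℕ) : ZMod v) = ((x : ℕ) : ZMod v) := by
        rw [show (3 : ZMod v) = ((3 : ℕ) : ZMod v) by push_cast; ring, ← Nat.cast_mul,
          Nat.mul_div_cancel' h3x]
      rw [hG]
      simp only
      rw [hyw, glen_mul3, h3w, glen_natCast]
    rw [hG1, hG2, hGy]
end

section
/- Let x ≥ 4 be even and suppose that for every admissible multiset of the form {1^a, 2^b, x^c} with a + b < x - 1 and c < x^2 - x + 1 there is a realization, and moreover that every realization of an admissible multiset {1^a, 2^b, x^c} with a+b < x-1 and c ≥ x^2 - 2x + 1 is x-growable (growing adds x copies of x). Also assume every admissible multiset {1^a, 2^b, x^c} with a + b ≥ x - 1 is realizable. Then every admissible multiset with underlying set contained in {1, 2, x} of the form {1^a, 2^b, x^c} is realizable. -/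
def Admissible (v : ℕ) (L : Multiset ℕ) : Prop :=
  Multiset.card L + 1 = v ∧ (∀ l ∈ L, 1 ≤ l ∧ l ≤ v / 2) ∧
  ∀ d, d ∣ v → Multiset.card (L.filter (fun l => d ∣ l)) ≤ v - d

def Realizable (v : ℕ) (L : Multiset ℕ) : Prop :=
  ∃ h : List ℕ, IsHamPath v h ∧ lengths v h = L

def mset12x (a b c x : ℕ) : Multiset ℕ :=
  Multiset.replicate a 1 + Multiset.replicate b 2 + Multiset.replicate c x


lemma card_filter_replicate (p : ℕ → Prop) [DecidablePred p] (n a : ℕ) :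
    Multiset.card ((Multiset.replicate n a).filter p) = if p a then n else 0 := by
  split_ifs with h
  · rw [Multiset.filter_eq_self.mpr fun l hl => (Multiset.eq_of_mem_replicate hl) ▸ h,
      Multiset.card_replicate]
  · rw [Multiset.filter_eq_nil.mpr fun l hl => (Multiset.eq_of_mem_replicate hl) ▸ h,
      Multiset.card_zero]

lemma cnt_mset12x (d a b c x : ℕ) :
    Multiset.card ((mset12x a b c x).filter (fun l => d ∣ l)) =
      (if d ∣ 1 then a else 0) + (if d ∣ 2 then b else 0) + (if d ∣ x then c else 0) := by
  simp only [mset12x, Multiset.filter_add, Multiset.card_add, card_filter_replicate]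

lemma aux_cx (x c : ℕ) (h3 : 4 ≤ x) (h : x ^ 2 - x + 1 ≤ c) :
    x ^ 2 - 2 * x + 1 ≤ c - x := by
  have hsq : x ^ 2 = x * x := sq x
  have h2 : 4 * x ≤ x * x := Nat.mul_le_mul_right x h3
  rw [hsq] at h ⊢
  omega

lemma adm_step (x a b c : ℕ) (hx : 4 ≤ x) (hxe : Even x) (hc : x ^ 2 - x + 1 ≤ c)
    (hA : Admissible (a + b + c + 1) (mset12x a b c x)) :
    Admissible (a + b + (c - x) + 1) (mset12x a b (c - x) x) := by
  obtain ⟨hcard, hmem, hdiv⟩ := hA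
  have hxx : 4 * x ≤ x * x := Nat.mul_le_mul_right x hx
  have hsq : x ^ 2 = x * x := sq x
  have hc3 : 3 * x ≤ c := by omega
  refine ⟨?_, ?_, ?_⟩
  · simp [mset12x]
  · intro l hl
    have hl' : l = 1 ∨ l = 2 ∨ l = x := by
      simp only [mset12x, Multiset.mem_add] at hl
      rcases hl with (h | h) | h <;>
        [exact Or.inl (Multiset.eq_of_mem_replicate h);
         exact Or.inr (Or.inl (Multiset.eq_of_mem_replicate h));
         exact Or.inr (Or.inr (Multiset.eq_of_mem_replicate h))]
    have hlx : 1 ≤ l ∧ l ≤ x := by rcases hl' with rfl | rfl | rfl <;> omega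
    refine ⟨hlx.1, le_trans hlx.2 ?_⟩
    rw [Nat.le_div_iff_mul_le (by norm_num)]
    omega
  · intro d hd
    have hvpos : 0 < a + b + (c - x) + 1 := by omega
    have hdle : d ≤ a + b + (c - x) + 1 := Nat.le_of_dvd hvpos hd
    rw [cnt_mset12x]
    by_cases hdx : d ∣ x
    · have hdv : d ∣ a + b + c + 1 := by
        have : a + b + c + 1 = (a + b + (c - x) + 1) + x := by omega
        rw [this]; exact Nat.dvd_add hd hdx
      have h2 := hdiv d hdv
      rw [cnt_mset12x] at h2
      simp only [hdx, if_true] at h2 ⊢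
      omega
    · have h1 : ¬ d ∣ 1 := fun h => hdx ((Nat.dvd_one.mp h) ▸ one_dvd x)
      have h2 : ¬ d ∣ 2 := fun h => hdx (h.trans hxe.two_dvd)
      simp [h1, h2, hdx]

theorem stmt_17 (x : ℕ) (hx4 : 4 ≤ x) (hxe : Even x)
    (H1 : ∀ a b c, a + b < x - 1 → c < x ^ 2 - x + 1 →
      Admissible (a + b + c + 1) (mset12x a b c x) →
      Realizable (a + b + c + 1) (mset12x a b c x))
    (H2 : ∀ a b c (h : List ℕ), a + b < x - 1 → x ^ 2 - 2 * x + 1 ≤ c →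
      IsHamPath (a + b + c + 1) h → lengths (a + b + c + 1) h = mset12x a b c x →
      ∃ m, Growable (a + b + c + 1) x m h)
    (Hgrow : ∀ (v : ℕ) (L : Multiset ℕ) (h : List ℕ) (m : ℕ),
      IsHamPath v h → lengths v h = L → Growable v x m h →
      Realizable (v + x) (L + Multiset.replicate x x))
    (H3 : ∀ a b c, x - 1 ≤ a + b →
      Admissible (a + b + c + 1) (mset12x a b c x) →
      Realizable (a + b + c + 1) (mset12x a b c x)) :
    ∀ a b c, Admissible (a + b + c + 1) (mset12x a b c x) →
      Realizable (a + b + c + 1) (mset12x a b c x) := by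
  intro a b c
  rcases le_or_gt (x - 1) (a + b) with hab | hab
  · exact H3 a b c hab
  · have hsq : x ^ 2 = x * x := sq x
    have hxx : 4 * x ≤ x * x := Nat.mul_le_mul_right x hx4
    induction c using Nat.strong_induction_on with
    | _ c IH =>
      intro hA
      by_cases hc : c < x ^ 2 - x + 1
      · exact H1 a b c hab hc hA
      · have hc' : x ^ 2 - x + 1 ≤ c := le_of_not_gt hc
        have hcx : x ≤ c := by omega
        obtain ⟨h, hham, hlen⟩ := IH (c - x) (by omega) (adm_step x a b c hx4 hxe hc' hA)
        have hcxx : x ^ 2 - 2 * x + 1 ≤ c - x := aux_cx x c hx4 hc'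
        obtain ⟨m, hg⟩ := H2 a b (c - x) h hab hcxx hham hlen
        have hr := Hgrow _ _ h m hham hlen hg
        have e1 : a + b + (c - x) + 1 + x = a + b + c + 1 := by omega
        have e2 : mset12x a b (c - x) x + Multiset.replicate x x = mset12x a b c x := by
          simp only [mset12x, add_assoc, ← Multiset.replicate_add, Nat.sub_add_cancel hcx]
        rwa [e1, e2] at hr
end
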